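/- arXiv:2306.06532 — 6 statements merged into one kernel-verified Lean document; each statement's English description precedes it below -/
import Mathlib

section
/- Let M N : ℕ be positive, A : Matrix (Fin M) (Fin M) ℝ, B : Matrix (Fin N) (Fin N) ℝ, μ : Fin M → ℝ and ω : Fin N → ℝ. Suppose φ : ℝ → Fin M → ℝ satisfies, for every t : ℝ and l : Fin M, HasDerivAt (fun s => φ s l) (μ l + ∑ k, A l k * Real.sin (φ t k - φ t l)) t, and ψ : ℝ → Fin N → ℝ satisfies, for every t : ℝ and i : Fin N, HasDerivAt (fun s => ψ s i) (ω i + ∑ j, B i j * Real.sin (ψ t j - ψ t i)) t. Define θ : ℝ → Fin M × Fin N → ℝ by θ t (l, i) = φ t l + ψ t i. Then for every t : ℝ and every (l, i) : Fin M × Fin N, HasDerivAt (fun s => θ s (l, i)) (μ l + ω i + ∑ p : Fin M × Fin N, (A ⊞ B) (l, i) p * Real.sin (θ t p - θ t (l, i))) t. -/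
/-- The Kronecker sum `A ⊞ B = A ⊗ I_N + I_M ⊗ B` of two square matrices. -/
def kronSum {M N : ℕ} (A : Matrix (Fin M) (Fin M) ℝ) (B : Matrix (Fin N) (Fin N) ℝ) :
    Matrix (Fin M × Fin N) (Fin M × Fin N) ℝ :=
  fun p q => (if p.2 = q.2 then A p.1 q.1 else 0) + (if p.1 = q.1 then B p.2 q.2 else 0)

theorem sum_kronSum_mul {M N : ℕ} (A : Matrix (Fin M) (Fin M) ℝ) (B : Matrix (Fin N) (Fin N) ℝ)
    (g : Fin M × Fin N → ℝ) (l : Fin M) (i : Fin N) :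
    ∑ p, kronSum A B (l, i) p * g p = ∑ k, A l k * g (k, i) + ∑ j, B i j * g (l, j) := by
  simp only [kronSum, add_mul, ite_mul, zero_mul, Finset.sum_add_distrib, Fintype.sum_prod_type,
    Finset.sum_ite_eq, Finset.mem_univ, if_true]
  rw [Finset.sum_comm (f := fun x y => if l = x then B i y * g (x, y) else 0)]
  simp only [Finset.sum_ite_eq, Finset.mem_univ, if_true]

theorem composed_trajectory_solves_multiplex_kuramoto_general
    (M N : ℕ)
    (A : Matrix (Fin M) (Fin M) ℝ) (B : Matrix (Fin N) (Fin N) ℝ)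
    (μ : Fin M → ℝ) (ω : Fin N → ℝ)
    (φ : ℝ → Fin M → ℝ) (ψ : ℝ → Fin N → ℝ)
    (hφ : ∀ (t : ℝ) (l : Fin M),
      HasDerivAt (fun s => φ s l) (μ l + ∑ k, A l k * Real.sin (φ t k - φ t l)) t)
    (hψ : ∀ (t : ℝ) (i : Fin N),
      HasDerivAt (fun s => ψ s i) (ω i + ∑ j, B i j * Real.sin (ψ t j - ψ t i)) t)
    (θ : ℝ → Fin M × Fin N → ℝ)
    (hθ : ∀ (t : ℝ) (l : Fin M) (i : Fin N), θ t (l, i) = φ t l + ψ t i) :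
    ∀ (t : ℝ) (l : Fin M) (i : Fin N),
      HasDerivAt (fun s => θ s (l, i))
        (μ l + ω i +
          ∑ p : Fin M × Fin N, kronSum A B (l, i) p * Real.sin (θ t p - θ t (l, i))) t := by
  intro t l i
  rw [show (fun s => θ s (l, i)) = fun s => φ s l + ψ s i from funext fun s => hθ s l i]
  refine ((hφ t l).add (hψ t i)).congr_deriv ?_
  simp only [sum_kronSum_mul, hθ, add_sub_add_right_eq_sub, add_sub_add_left_eq_sub]
  ring

theorem composed_trajectory_solves_multiplex_kuramoto
    (M N : ℕ) (hM : 0 < M) (hN : 0 < N)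
    (A : Matrix (Fin M) (Fin M) ℝ) (B : Matrix (Fin N) (Fin N) ℝ)
    (μ : Fin M → ℝ) (ω : Fin N → ℝ)
    (φ : ℝ → Fin M → ℝ) (ψ : ℝ → Fin N → ℝ)
    (hφ : ∀ (t : ℝ) (l : Fin M),
      HasDerivAt (fun s => φ s l) (μ l + ∑ k, A l k * Real.sin (φ t k - φ t l)) t)
    (hψ : ∀ (t : ℝ) (i : Fin N),
      HasDerivAt (fun s => ψ s i) (ω i + ∑ j, B i j * Real.sin (ψ t j - ψ t i)) t)
    (θ : ℝ → Fin M × Fin N → ℝ)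
    (hθ : ∀ (t : ℝ) (l : Fin M) (i : Fin N), θ t (l, i) = φ t l + ψ t i) :
    ∀ (t : ℝ) (l : Fin M) (i : Fin N),
      HasDerivAt (fun s => θ s (l, i))
        (μ l + ω i +
          ∑ p : Fin M × Fin N, kronSum A B (l, i) p * Real.sin (θ t p - θ t (l, i))) t :=
  composed_trajectory_solves_multiplex_kuramoto_general M N A B μ ω φ ψ hφ hψ θ hθ
end

section
/- Let M N : ℕ be positive, A : Matrix (Fin M) (Fin M) ℝ and B : Matrix (Fin N) (Fin N) ℝ. Suppose φ* : Fin M → ℝ satisfies F_A φ* = 0 and ψ* : Fin N → ℝ satisfies F_B ψ* = 0. Define θ* : Fin M × Fin N → ℝ by θ* (l, i) = φ* l + ψ* i. Then F_{A ⊞ B} θ* = 0; that is, the composed state θ* is an equilibrium of the Kuramoto system on the multiplex network A ⊞ B. -/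
/-- The Kuramoto vector field associated with a coupling matrix `C`. -/
noncomputable def kuraField {ι : Type*} [Fintype ι] (C : Matrix ι ι ℝ) (θ : ι → ℝ) : ι → ℝ :=
  fun i => ∑ j, C i j * Real.sin (θ j - θ i)

theorem composed_state_is_equilibrium
    (M N : ℕ) (hM : 0 < M) (hN : 0 < N)
    (A : Matrix (Fin M) (Fin M) ℝ) (B : Matrix (Fin N) (Fin N) ℝ)
    (φ : Fin M → ℝ) (ψ : Fin N → ℝ)
    (hφ : kuraField A φ = 0) (hψ : kuraField B ψ = 0)
    (θ : Fin M × Fin N → ℝ) (hθ : ∀ (l : Fin M) (i : Fin N), θ (l, i) = φ l + ψ i) :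
    kuraField (kronSum A B) θ = 0 := by
  funext p
  obtain ⟨l, i⟩ := p
  have hA : ∑ k, A l k * Real.sin (φ k - φ l) = 0 := congrFun hφ l
  have hB : ∑ j, B i j * Real.sin (ψ j - ψ i) = 0 := congrFun hψ i
  simp only [kuraField, kronSum, Pi.zero_apply, Fintype.sum_prod_type, add_mul,
    Finset.sum_add_distrib, ite_mul, zero_mul, Finset.sum_ite_eq', Finset.sum_ite_eq,
    Finset.mem_univ, if_true, hθ]
  have e1 : ∀ (k : Fin M), φ k + ψ i - (φ l + ψ i) = φ k - φ l := by intro k; ring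
  have e2 : ∀ (j : Fin N), φ l + ψ j - (φ l + ψ i) = ψ j - ψ i := by intro j; ring
  simp only [e1, e2]
  simp [Finset.sum_ite_eq, e2, hA, hB]
end

section
/- Let M N : ℕ be positive, A : Matrix (Fin M) (Fin M) ℝ, B : Matrix (Fin N) (Fin N) ℝ, φ* : Fin M → ℝ, ψ* : Fin N → ℝ, and define θ* : Fin M × Fin N → ℝ by θ* (l, i) = φ* l + ψ* i. Then the Kuramoto Jacobian of the multiplex coupling matrix at the composed state is the Kronecker sum of the layer Jacobians: J_{A ⊞ B}(θ*) = (J_A(φ*)) ⊞ (J_B(ψ*)). -/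
/-- The Kuramoto Jacobian of the coupling matrix `C` at the state `θ`. -/
noncomputable def kuraJac {ι : Type*} [Fintype ι] [DecidableEq ι]
    (C : Matrix ι ι ℝ) (θ : ι → ℝ) : Matrix ι ι ℝ :=
  fun i j =>
    if i = j then -∑ k ∈ Finset.univ \ {i}, C i k * Real.cos (θ k - θ i)
    else C i j * Real.cos (θ j - θ i)

/-!
Writing `W_C(θ) i j = C i j * cos (θ j - θ i)`, the Kuramoto Jacobian is the negated graph
Laplacian `W_C(θ) - diag (W_C(θ) 1)` of the weights `W_C(θ)`. At a composed state the phase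
difference between `(l, i)` and `(k, j)` is `φ k - φ l` within a layer copy (`i = j`) and
`ψ j - ψ i` across copies (`l = k`), so `W_{A ⊞ B}(θ) = W_A(φ) ⊞ W_B(ψ)`. Since `⊞` is additive,
sends diagonal matrices to diagonal matrices and splits row sums, it commutes with the Laplacian.
-/

open Matrix

noncomputable def kuraWeight {ι : Type*} (C : Matrix ι ι ℝ) (θ : ι → ℝ) : Matrix ι ι ℝ :=
  of fun i j => C i j * Real.cos (θ j - θ i)

theorem kuraJac_eq_kuraWeight_sub_diagonal {ι : Type*} [Fintype ι] [DecidableEq ι]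
    (C : Matrix ι ι ℝ) (θ : ι → ℝ) :
    kuraJac C θ = kuraWeight C θ - diagonal (kuraWeight C θ *ᵥ 1) := by
  ext i j
  by_cases hij : i = j
  · subst hij
    simp only [kuraJac, kuraWeight, if_true, Matrix.sub_apply, diagonal_apply_eq, mulVec,
      dotProduct, of_apply, Pi.one_apply, mul_one, Finset.sdiff_singleton_eq_erase,
      Finset.sum_erase_eq_sub (Finset.mem_univ i), sub_self, Real.cos_zero]
    ring
  · simp [kuraJac, kuraWeight, hij]

section KronSum

variable {M N : ℕ}

theorem kronSum_sub (A A' : Matrix (Fin M) (Fin M) ℝ) (B B' : Matrix (Fin N) (Fin N) ℝ) :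
    kronSum (A - A') (B - B') = kronSum A B - kronSum A' B' := by
  ext p q
  simp only [kronSum, Matrix.sub_apply]
  split_ifs <;> ring

theorem kronSum_diagonal (d : Fin M → ℝ) (e : Fin N → ℝ) :
    kronSum (diagonal d) (diagonal e) = diagonal fun p => d p.1 + e p.2 := by
  ext ⟨l, i⟩ ⟨k, j⟩
  by_cases hlk : l = k <;> by_cases hij : i = j <;> simp [kronSum, hlk, hij]

theorem kronSum_mulVec_one (A : Matrix (Fin M) (Fin M) ℝ) (B : Matrix (Fin N) (Fin N) ℝ) :
    kronSum A B *ᵥ 1 = fun p => (A *ᵥ 1) p.1 + (B *ᵥ 1) p.2 := by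
  ext ⟨l, i⟩
  simp [kronSum, mulVec, dotProduct, Fintype.sum_prod_type, Finset.sum_add_distrib, Finset.sum_ite_eq]

theorem kuraWeight_kronSum (A : Matrix (Fin M) (Fin M) ℝ) (B : Matrix (Fin N) (Fin N) ℝ)
    (φ : Fin M → ℝ) (ψ : Fin N → ℝ) (θ : Fin M × Fin N → ℝ)
    (hθ : ∀ l i, θ (l, i) = φ l + ψ i) :
    kuraWeight (kronSum A B) θ = kronSum (kuraWeight A φ) (kuraWeight B ψ) := by
  ext ⟨l, i⟩ ⟨k, j⟩
  simp only [kuraWeight, kronSum, of_apply, hθ, add_mul, ite_mul, zero_mul]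
  congr 1
  · split_ifs with hij
    · subst hij; ring_nf
    · rfl
  · split_ifs with hlk
    · subst hlk; ring_nf
    · rfl

end KronSum

theorem kuraJac_kronSum_composed_general
    (M N : ℕ)
    (A : Matrix (Fin M) (Fin M) ℝ) (B : Matrix (Fin N) (Fin N) ℝ)
    (φ : Fin M → ℝ) (ψ : Fin N → ℝ)
    (θ : Fin M × Fin N → ℝ) (hθ : ∀ (l : Fin M) (i : Fin N), θ (l, i) = φ l + ψ i) :
    kuraJac (kronSum A B) θ = kronSum (kuraJac A φ) (kuraJac B ψ) := by
  rw [kuraJac_eq_kuraWeight_sub_diagonal, kuraJac_eq_kuraWeight_sub_diagonal,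
    kuraJac_eq_kuraWeight_sub_diagonal, kronSum_sub, kronSum_diagonal,
    kuraWeight_kronSum A B φ ψ θ hθ, kronSum_mulVec_one]

theorem kuraJac_kronSum_composed
    (M N : ℕ) (hM : 0 < M) (hN : 0 < N)
    (A : Matrix (Fin M) (Fin M) ℝ) (B : Matrix (Fin N) (Fin N) ℝ)
    (φ : Fin M → ℝ) (ψ : Fin N → ℝ)
    (θ : Fin M × Fin N → ℝ) (hθ : ∀ (l : Fin M) (i : Fin N), θ (l, i) = φ l + ψ i) :
    kuraJac (kronSum A B) θ = kronSum (kuraJac A φ) (kuraJac B ψ) :=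
  kuraJac_kronSum_composed_general M N A B φ ψ θ hθ
end

section
/- Let M N : ℕ be positive, A : Matrix (Fin M) (Fin M) ℝ and B : Matrix (Fin N) (Fin N) ℝ both positive semidefinite. Then the kernel dimension of the Kronecker sum is the product of the kernel dimensions: Module.finrank ℝ (LinearMap.ker (Matrix.mulVecLin (A ⊞ B))) = Module.finrank ℝ (LinearMap.ker (Matrix.mulVecLin A)) * Module.finrank ℝ (LinearMap.ker (Matrix.mulVecLin B)). -/
open Matrix Kronecker
open scoped ComplexOrder

namespace Matrix

variable {R m n : Type*}

theorem diagonal_kronecker_one_add_one_kronecker_diagonal [Semiring R] [DecidableEq m]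
    [DecidableEq n] (a : m → R) (b : n → R) :
    diagonal a ⊗ₖ (1 : Matrix n n R) + (1 : Matrix m m R) ⊗ₖ diagonal b =
      diagonal fun p => a p.1 + b p.2 := by
  rw [← diagonal_one, ← diagonal_one, diagonal_kronecker_diagonal, diagonal_kronecker_diagonal,
    diagonal_add]
  simp only [mul_one, one_mul]

theorem finrank_ker_mulVecLin_eq_card_of_rank_eq [Field R] [Fintype n] {A : Matrix m n R}
    {p : n → Prop} [DecidablePred p] (h : A.rank = Fintype.card {i // ¬p i}) :
    Module.finrank R (LinearMap.ker A.mulVecLin) = Fintype.card {i // p i} := by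
  have hrank := LinearMap.finrank_range_add_finrank_ker A.mulVecLin
  rw [Module.finrank_fintype_fun_eq_card, ← rank, h, Fintype.card_subtype_compl] at hrank
  have := Fintype.card_subtype_le p
  omega

theorem rank_mul_mul_star_of_mem_unitary [CommRing R] [StarRing R] [Fintype n] [DecidableEq n]
    {U : Matrix n n R} (hU : U ∈ unitary (Matrix n n R)) (X : Matrix n n R) :
    (U * X * star U).rank = X.rank := by
  rw [rank_mul_eq_left_of_isUnit_det _ _
      (isUnit_det_of_right_inverse (Unitary.star_mul_self_of_mem hU)),
    rank_mul_eq_right_of_isUnit_det _ _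
      (isUnit_det_of_right_inverse (Unitary.mul_star_self_of_mem hU))]

theorem kronecker_one_add_one_kronecker_mul_mul_star [CommSemiring R] [StarRing R] [Fintype m]
    [Fintype n] [DecidableEq m] [DecidableEq n] {U : Matrix m m R} {V : Matrix n n R}
    (hU : U ∈ unitary (Matrix m m R)) (hV : V ∈ unitary (Matrix n n R))
    (X : Matrix m m R) (Y : Matrix n n R) :
    (U * X * star U) ⊗ₖ 1 + 1 ⊗ₖ (V * Y * star V) =
      (U ⊗ₖ V) * (X ⊗ₖ 1 + 1 ⊗ₖ Y) * star (U ⊗ₖ V) := by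
  have hX : (U * X * star U) ⊗ₖ (1 : Matrix n n R) =
      (U ⊗ₖ V) * (X ⊗ₖ 1) * star (U ⊗ₖ V) := by
    simp only [star_eq_conjTranspose, conjTranspose_kronecker]
    rw [← mul_kronecker_mul, ← mul_kronecker_mul, mul_one, ← star_eq_conjTranspose V,
      Unitary.mul_star_self_of_mem hV]
  have hY : (1 : Matrix m m R) ⊗ₖ (V * Y * star V) =
      (U ⊗ₖ V) * (1 ⊗ₖ Y) * star (U ⊗ₖ V) := by
    simp only [star_eq_conjTranspose, conjTranspose_kronecker]
    rw [← mul_kronecker_mul, ← mul_kronecker_mul, mul_one, ← star_eq_conjTranspose U,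
      Unitary.mul_star_self_of_mem hU]
  rw [hX, hY, mul_add, add_mul]

namespace IsHermitian

variable {𝕜 : Type*} [RCLike 𝕜] [Fintype m] [Fintype n] [DecidableEq m] [DecidableEq n]
  {A : Matrix m m 𝕜} {B : Matrix n n 𝕜}

theorem rank_kronecker_one_add_one_kronecker (hA : A.IsHermitian) (hB : B.IsHermitian) :
    (A ⊗ₖ 1 + 1 ⊗ₖ B).rank =
      Fintype.card {p : m × n // hA.eigenvalues p.1 + hB.eigenvalues p.2 ≠ 0} := by
  conv_lhs => rw [hA.spectral_theorem, hB.spectral_theorem]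
  rw [Unitary.conjStarAlgAut_apply, Unitary.conjStarAlgAut_apply,
    kronecker_one_add_one_kronecker_mul_mul_star hA.eigenvectorUnitary.2 hB.eigenvectorUnitary.2,
    rank_mul_mul_star_of_mem_unitary
      (kronecker_mem_unitary hA.eigenvectorUnitary.2 hB.eigenvectorUnitary.2),
    diagonal_kronecker_one_add_one_kronecker_diagonal, rank_diagonal]
  simp only [Function.comp_apply, ← RCLike.ofReal_add, ne_eq, RCLike.ofReal_eq_zero]

theorem finrank_ker_mulVecLin (hA : A.IsHermitian) :
    Module.finrank 𝕜 (LinearMap.ker A.mulVecLin) = Fintype.card {i // hA.eigenvalues i = 0} :=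
  finrank_ker_mulVecLin_eq_card_of_rank_eq hA.rank_eq_card_non_zero_eigs

theorem finrank_ker_kronecker_one_add_one_kronecker (hA : A.IsHermitian) (hB : B.IsHermitian) :
    Module.finrank 𝕜 (LinearMap.ker (A ⊗ₖ 1 + 1 ⊗ₖ B).mulVecLin) =
      Fintype.card {p : m × n // hA.eigenvalues p.1 + hB.eigenvalues p.2 = 0} :=
  finrank_ker_mulVecLin_eq_card_of_rank_eq (rank_kronecker_one_add_one_kronecker hA hB)

end IsHermitian

theorem PosSemidef.finrank_ker_kronecker_one_add_one_kronecker {𝕜 : Type*} [RCLike 𝕜]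
    [Fintype m] [Fintype n] [DecidableEq m] [DecidableEq n] {A : Matrix m m 𝕜}
    {B : Matrix n n 𝕜} (hA : A.PosSemidef) (hB : B.PosSemidef) :
    Module.finrank 𝕜 (LinearMap.ker (A ⊗ₖ 1 + 1 ⊗ₖ B).mulVecLin) =
      Module.finrank 𝕜 (LinearMap.ker A.mulVecLin) *
        Module.finrank 𝕜 (LinearMap.ker B.mulVecLin) := by
  rw [hA.1.finrank_ker_kronecker_one_add_one_kronecker hB.1, hA.1.finrank_ker_mulVecLin,
    hB.1.finrank_ker_mulVecLin, ← Fintype.card_prod]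
  exact Fintype.card_congr <| (Equiv.subtypeEquivRight fun p : m × n =>
    add_eq_zero_iff_of_nonneg (hA.eigenvalues_nonneg p.1) (hB.eigenvalues_nonneg p.2)).trans
      (Equiv.subtypeProdEquivProd (p := fun i => hA.1.eigenvalues i = 0)
        (q := fun j => hB.1.eigenvalues j = 0))

end Matrix

theorem kronSum_eq_kronecker_one_add_one_kronecker {M N : ℕ} (A : Matrix (Fin M) (Fin M) ℝ)
    (B : Matrix (Fin N) (Fin N) ℝ) : kronSum A B = A ⊗ₖ 1 + 1 ⊗ₖ B := by
  ext p q
  simp [kronSum, kroneckerMap_apply, one_apply, mul_ite, ite_mul]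

theorem finrank_ker_kronSum_of_posSemidef_general
    (M N : ℕ)
    (A : Matrix (Fin M) (Fin M) ℝ) (B : Matrix (Fin N) (Fin N) ℝ)
    (hA : A.PosSemidef) (hB : B.PosSemidef) :
    Module.finrank ℝ (LinearMap.ker (Matrix.mulVecLin (kronSum A B))) =
      Module.finrank ℝ (LinearMap.ker (Matrix.mulVecLin A)) *
        Module.finrank ℝ (LinearMap.ker (Matrix.mulVecLin B)) := by
  rw [kronSum_eq_kronecker_one_add_one_kronecker]
  exact hA.finrank_ker_kronecker_one_add_one_kronecker hB

theorem finrank_ker_kronSum_of_posSemidef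
    (M N : ℕ) (hM : 0 < M) (hN : 0 < N)
    (A : Matrix (Fin M) (Fin M) ℝ) (B : Matrix (Fin N) (Fin N) ℝ)
    (hA : A.PosSemidef) (hB : B.PosSemidef) :
    Module.finrank ℝ (LinearMap.ker (Matrix.mulVecLin (kronSum A B))) =
      Module.finrank ℝ (LinearMap.ker (Matrix.mulVecLin A)) *
        Module.finrank ℝ (LinearMap.ker (Matrix.mulVecLin B)) :=
  finrank_ker_kronSum_of_posSemidef_general M N A B hA hB
end

section
/- Let M N : ℕ be positive, A : Matrix (Fin M) (Fin M) ℝ and B : Matrix (Fin N) (Fin N) ℝ be symmetric, and let φ* : Fin M → ℝ and ψ* : Fin N → ℝ be equilibria, i.e. F_A φ* = 0 and F_B ψ* = 0. Define the composed equilibrium θ* : Fin M × Fin N → ℝ by θ* (l, i) = φ* l + ψ* i. Then θ* is linearly stable for the Kuramoto system on A ⊞ B if and only if φ* is linearly stable for the Kuramoto system on A and ψ* is linearly stable for the Kuramoto system on B; here a state x is linearly stable for coupling matrix C if the Kuramoto Jacobian J := J_C(x) satisfies (-J).PosSemidef and Module.finrank ℝ (LinearMap.ker (Matrix.mulVecLin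 J)) = 1. -/
/-- A state `x` is linearly stable for the coupling matrix `C` if the Kuramoto Jacobian
`J := J_C(x)` is negative semidefinite and `0` is an eigenvalue of `J` of multiplicity one. -/
noncomputable def LinStable {ι : Type*} [Fintype ι] [DecidableEq ι]
    (C : Matrix ι ι ℝ) (x : ι → ℝ) : Prop :=
  (-(kuraJac C x)).PosSemidef ∧
    Module.finrank ℝ (LinearMap.ker (Matrix.mulVecLin (kuraJac C x))) = 1

/-!
At `θ* = φ* ⊕ ψ*` the phase differences split, `θ*(k,j) - θ*(l,i) = (φ*k - φ*l) + (ψ*j - ψ*i)`,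
and an off-diagonal entry of `A ⊞ B` is nonzero only when one of the two indices agrees, so
the Jacobian is the Kronecker sum `J_A(φ*) ⊞ J_B(ψ*)` off the diagonal; both matrices have zero
row sums, which forces equality on the diagonal as well.

For symmetric `P`, `Q` annihilating the constant vector, the quadratic form of `P ⊞ Q` is the sum
of the forms of `P` on the columns and of `Q` on the rows of `x`, and on vectors depending on the
first (second) coordinate only it is a positive multiple of the form of `P` (`Q`). Hence
`P ⊞ Q` is positive semidefinite iff `P` and `Q` are, and then `(P ⊞ Q) x = 0` iff every column
of `x` lies in `ker P` and every row in `ker Q`; such `x` are all constant iff the kernels of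
`P` and `Q` consist of constants. Applied to `P = -J_A(φ*)`, `Q = -J_B(ψ*)` this is the theorem,
since a kernel containing `1` has dimension one iff it consists of constants.
-/

open Matrix Finset

namespace Matrix

variable {ι R : Type*} [Fintype ι]

theorem ext_of_mulVec_one_eq_zero [DecidableEq ι] [Ring R] {P Q : Matrix ι ι R}
    (hP : P *ᵥ 1 = 0) (hQ : Q *ᵥ 1 = 0) (h : ∀ i j, i ≠ j → P i j = Q i j) : P = Q := by
  ext i j
  obtain rfl | hij := eq_or_ne i j
  · have diag (A : Matrix ι ι R) (hA : A *ᵥ 1 = 0) : A i i = -∑ k ∈ univ.erase i, A i k := by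
      have hrow := congrFun hA i
      simp only [mulVec, dotProduct, Pi.one_apply, mul_one, Pi.zero_apply] at hrow
      rw [← add_sum_erase _ _ (mem_univ i)] at hrow
      exact eq_neg_of_add_eq_zero_left hrow
    rw [diag P hP, diag Q hQ]
    exact congrArg _ (sum_congr rfl fun k hk => h i k (ne_of_mem_erase hk).symm)
  · exact h i j hij

theorem mulVec_const_eq_zero [CommSemiring R] {P : Matrix ι ι R} (hP : P *ᵥ 1 = 0) (c : R) :
    P *ᵥ (fun _ => c) = 0 := by
  rw [show (fun _ => c) = c • (1 : ι → R) from funext fun _ => (mul_one c).symm, mulVec_smul, hP,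
    smul_zero]

def HasConstantKernel [Semiring R] (P : Matrix ι ι R) : Prop :=
  ∀ v, P *ᵥ v = 0 → ∀ i j, v i = v j

theorem hasConstantKernel_neg [Ring R] {P : Matrix ι ι R} :
    (-P).HasConstantKernel ↔ P.HasConstantKernel := by
  simp only [HasConstantKernel, neg_mulVec, neg_eq_zero]

theorem finrank_ker_mulVecLin_eq_one_iff {K : Type*} [Field K] [Nonempty ι] {P : Matrix ι ι K}
    (hP : P *ᵥ 1 = 0) :
    Module.finrank K (LinearMap.ker P.mulVecLin) = 1 ↔ P.HasConstantKernel := by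
  have hspan : K ∙ (1 : ι → K) ≤ LinearMap.ker P.mulVecLin := by
    rwa [Submodule.span_le, Set.singleton_subset_iff, SetLike.mem_coe, LinearMap.mem_ker,
      mulVecLin_apply]
  have hrank : Module.finrank K (K ∙ (1 : ι → K)) = 1 := finrank_span_singleton one_ne_zero
  have hconst : LinearMap.ker P.mulVecLin ≤ K ∙ 1 ↔ P.HasConstantKernel := by
    refine forall_congr' fun v => ?_
    rw [LinearMap.mem_ker, mulVecLin_apply, Submodule.mem_span_singleton]
    refine imp_congr_right fun _ => ⟨?_, fun h => ⟨v (Classical.arbitrary ι), ?_⟩⟩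
    · rintro ⟨c, rfl⟩ i j
      simp
    · ext i
      simp [h _ i]
  rw [← hconst]
  constructor
  · intro h
    exact (Submodule.eq_of_le_of_finrank_le hspan (by rw [h, hrank])).ge
  · intro h
    rw [le_antisymm h hspan, hrank]

end Matrix

theorem dotProduct_comp_fst {α β R : Type*} [Fintype α] [Fintype β] [CommSemiring R]
    (u w : α → R) :
    (fun p : α × β => u p.1) ⬝ᵥ (fun p => w p.1) = Fintype.card β * (u ⬝ᵥ w) := by
  simp [dotProduct, Fintype.sum_prod_type, mul_sum]

theorem dotProduct_comp_snd {α β R : Type*} [Fintype α] [Fintype β] [CommSemiring R]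
    (u w : β → R) :
    (fun p : α × β => u p.2) ⬝ᵥ (fun p => w p.2) = Fintype.card α * (u ⬝ᵥ w) := by
  simp [dotProduct, Fintype.sum_prod_type, mul_sum]

section Kuramoto

variable {ι : Type*} [Fintype ι] [DecidableEq ι] (C : Matrix ι ι ℝ) (x : ι → ℝ)

theorem kuraJac_apply_of_ne {i j : ι} (h : i ≠ j) :
    kuraJac C x i j = C i j * Real.cos (x j - x i) :=
  if_neg h

theorem kuraJac_apply_self (i : ι) :
    kuraJac C x i i = -∑ k ∈ univ \ {i}, C i k * Real.cos (x k - x i) :=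
  if_pos rfl

theorem kuraJac_mulVec_one : kuraJac C x *ᵥ 1 = 0 := by
  ext i
  simp only [mulVec, dotProduct, Pi.one_apply, mul_one, Pi.zero_apply]
  rw [← add_sum_erase _ _ (mem_univ i), ← sdiff_singleton_eq_erase, kuraJac_apply_self,
    neg_add_eq_zero]
  exact sum_congr rfl fun k hk => (kuraJac_apply_of_ne C x (Ne.symm (by simpa using hk))).symm

theorem neg_kuraJac_mulVec_one : -kuraJac C x *ᵥ 1 = 0 := by
  rw [neg_mulVec, kuraJac_mulVec_one, neg_zero]

theorem kuraJac_isSymm {C : Matrix ι ι ℝ} (hC : C.IsSymm) : (kuraJac C x).IsSymm := by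
  refine IsSymm.ext fun i j => ?_
  obtain rfl | hij := eq_or_ne i j
  · rfl
  · rw [kuraJac_apply_of_ne _ _ hij.symm, kuraJac_apply_of_ne _ _ hij, hC.apply, ← Real.cos_neg,
      neg_sub]

theorem linStable_iff [Nonempty ι] :
    LinStable C x ↔ (-kuraJac C x).PosSemidef ∧ (-kuraJac C x).HasConstantKernel := by
  rw [LinStable, finrank_ker_mulVecLin_eq_one_iff (kuraJac_mulVec_one C x), hasConstantKernel_neg]

end Kuramoto

section KronSum

variable {M N : ℕ} {P : Matrix (Fin M) (Fin M) ℝ} {Q : Matrix (Fin N) (Fin N) ℝ}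

variable (P Q) in
theorem kronSum_mulVec (x : Fin M × Fin N → ℝ) (l : Fin M) (i : Fin N) :
    (kronSum P Q *ᵥ x) (l, i) = (P *ᵥ fun k => x (k, i)) l + (Q *ᵥ fun j => x (l, j)) i := by
  simp only [mulVec, dotProduct, kronSum, Fintype.sum_prod_type, add_mul, ite_mul, zero_mul,
    sum_add_distrib, sum_ite_irrel, sum_const_zero, sum_ite_eq, mem_univ, if_true]

variable (P Q) in
theorem neg_kronSum : -kronSum P Q = kronSum (-P) (-Q) := by
  ext p q
  change -(kronSum P Q p q) = _
  simp only [kronSum, Matrix.neg_apply]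
  split_ifs <;> ring

variable (P Q) in
theorem dotProduct_kronSum_mulVec (x : Fin M × Fin N → ℝ) :
    x ⬝ᵥ (kronSum P Q *ᵥ x) = ∑ i, (fun k => x (k, i)) ⬝ᵥ (P *ᵥ fun k => x (k, i)) +
      ∑ l, (fun j => x (l, j)) ⬝ᵥ (Q *ᵥ fun j => x (l, j)) := by
  simp only [dotProduct, Fintype.sum_prod_type, kronSum_mulVec, mul_add, sum_add_distrib]
  rw [sum_comm]

theorem kronSum_isSymm (hP : P.IsSymm) (hQ : Q.IsSymm) : (kronSum P Q).IsSymm :=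
  IsSymm.ext fun p q => by simp only [kronSum, hP.apply, hQ.apply, eq_comm]

theorem kronSum_mulVec_one_s13 (hP : P *ᵥ 1 = 0) (hQ : Q *ᵥ 1 = 0) : kronSum P Q *ᵥ 1 = 0 := by
  ext ⟨l, i⟩
  rw [kronSum_mulVec]
  simp [← Pi.one_def, hP, hQ]

theorem kronSum_mulVec_comp_fst (hQ : Q *ᵥ 1 = 0) (u : Fin M → ℝ) :
    kronSum P Q *ᵥ (fun p => u p.1) = fun p => (P *ᵥ u) p.1 := by
  ext ⟨l, i⟩
  simp [kronSum_mulVec, mulVec_const_eq_zero hQ]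

theorem kronSum_mulVec_comp_snd (hP : P *ᵥ 1 = 0) (v : Fin N → ℝ) :
    kronSum P Q *ᵥ (fun p => v p.2) = fun p => (Q *ᵥ v) p.2 := by
  ext ⟨l, i⟩
  simp [kronSum_mulVec, mulVec_const_eq_zero hP]
theorem posSemidef_kronSum_iff [Nonempty (Fin M)] [Nonempty (Fin N)] (hPs : P.IsSymm)
    (hQs : Q.IsSymm) (hP1 : P *ᵥ 1 = 0) (hQ1 : Q *ᵥ 1 = 0) :
    (kronSum P Q).PosSemidef ↔ P.PosSemidef ∧ Q.PosSemidef := by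
  refine ⟨fun h => ⟨?_, ?_⟩, fun ⟨hP, hQ⟩ => ?_⟩
  · refine .of_dotProduct_mulVec_nonneg (isHermitian_iff_isSymm.2 hPs) fun u => ?_
    have hu := h.dotProduct_mulVec_nonneg fun p => u p.1
    rw [star_trivial, kronSum_mulVec_comp_fst hQ1, dotProduct_comp_fst] at hu
    exact nonneg_of_mul_nonneg_right hu (Nat.cast_pos.2 Fintype.card_pos)
  · refine .of_dotProduct_mulVec_nonneg (isHermitian_iff_isSymm.2 hQs) fun v => ?_
    have hv := h.dotProduct_mulVec_nonneg fun p => v p.2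
    rw [star_trivial, kronSum_mulVec_comp_snd hP1, dotProduct_comp_snd] at hv
    exact nonneg_of_mul_nonneg_right hv (Nat.cast_pos.2 Fintype.card_pos)
  · refine .of_dotProduct_mulVec_nonneg (isHermitian_iff_isSymm.2 (kronSum_isSymm hPs hQs))
      fun x => ?_
    rw [star_trivial, dotProduct_kronSum_mulVec]
    exact add_nonneg (sum_nonneg fun i _ => by simpa using hP.dotProduct_mulVec_nonneg _)
      (sum_nonneg fun l _ => by simpa using hQ.dotProduct_mulVec_nonneg _)

theorem kronSum_mulVec_eq_zero_iff (hP : P.PosSemidef) (hQ : Q.PosSemidef)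
    (x : Fin M × Fin N → ℝ) :
    kronSum P Q *ᵥ x = 0 ↔
      (∀ i, P *ᵥ (fun k => x (k, i)) = 0) ∧ ∀ l, Q *ᵥ (fun j => x (l, j)) = 0 := by
  refine ⟨fun h => ?_, fun ⟨hcol, hrow⟩ => ?_⟩
  · have hcol i := hP.dotProduct_mulVec_nonneg fun k => x (k, i)
    have hrow l := hQ.dotProduct_mulVec_nonneg fun j => x (l, j)
    simp only [star_trivial] at hcol hrow
    have hsum := dotProduct_kronSum_mulVec P Q x
    rw [h, dotProduct_zero, eq_comm, add_eq_zero_iff_of_nonneg (sum_nonneg fun i _ => hcol i)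
      (sum_nonneg fun l _ => hrow l), sum_eq_zero_iff_of_nonneg fun i _ => hcol i,
      sum_eq_zero_iff_of_nonneg fun l _ => hrow l] at hsum
    exact ⟨fun i => (hP.dotProduct_mulVec_zero_iff _).1 (by simpa using hsum.1 i (mem_univ i)),
      fun l => (hQ.dotProduct_mulVec_zero_iff _).1 (by simpa using hsum.2 l (mem_univ l))⟩
  · ext ⟨l, i⟩
    rw [kronSum_mulVec, hcol i, hrow l]
    simp

theorem hasConstantKernel_kronSum_iff [Nonempty (Fin M)] [Nonempty (Fin N)] (hP : P.PosSemidef)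
    (hQ : Q.PosSemidef) (hP1 : P *ᵥ 1 = 0) (hQ1 : Q *ᵥ 1 = 0) :
    (kronSum P Q).HasConstantKernel ↔ P.HasConstantKernel ∧ Q.HasConstantKernel := by
  refine ⟨fun h => ⟨fun u hu k l => ?_, fun v hv i j => ?_⟩, fun ⟨hPc, hQc⟩ x hx p q => ?_⟩
  · exact h (fun p => u p.1) (by rw [kronSum_mulVec_comp_fst hQ1, hu]; rfl)
      (k, Classical.arbitrary _) (l, Classical.arbitrary _)
  · exact h (fun p => v p.2) (by rw [kronSum_mulVec_comp_snd hP1, hv]; rfl)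
      (Classical.arbitrary _, i) (Classical.arbitrary _, j)
  · obtain ⟨hcol, hrow⟩ := (kronSum_mulVec_eq_zero_iff hP hQ x).1 hx
    calc x p = x (q.1, p.2) := hPc _ (hcol p.2) p.1 q.1
      _ = x q := hQc _ (hrow q.1) p.2 q.2

theorem posSemidef_and_hasConstantKernel_kronSum_iff [Nonempty (Fin M)] [Nonempty (Fin N)]
    (hPs : P.IsSymm) (hQs : Q.IsSymm) (hP1 : P *ᵥ 1 = 0) (hQ1 : Q *ᵥ 1 = 0) :
    (kronSum P Q).PosSemidef ∧ (kronSum P Q).HasConstantKernel ↔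
      (P.PosSemidef ∧ P.HasConstantKernel) ∧ (Q.PosSemidef ∧ Q.HasConstantKernel) := by
  rw [posSemidef_kronSum_iff hPs hQs hP1 hQ1]
  constructor
  · rintro ⟨⟨hP, hQ⟩, hK⟩
    obtain ⟨hPK, hQK⟩ := (hasConstantKernel_kronSum_iff hP hQ hP1 hQ1).1 hK
    exact ⟨⟨hP, hPK⟩, hQ, hQK⟩
  · rintro ⟨⟨hP, hPK⟩, hQ, hQK⟩
    exact ⟨⟨hP, hQ⟩, (hasConstantKernel_kronSum_iff hP hQ hP1 hQ1).2 ⟨hPK, hQK⟩⟩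

end KronSum

theorem kuraJac_kronSum {M N : ℕ} (A : Matrix (Fin M) (Fin M) ℝ) (B : Matrix (Fin N) (Fin N) ℝ)
    {φ : Fin M → ℝ} {ψ : Fin N → ℝ} {θ : Fin M × Fin N → ℝ}
    (hθ : ∀ l i, θ (l, i) = φ l + ψ i) :
    kuraJac (kronSum A B) θ = kronSum (kuraJac A φ) (kuraJac B ψ) := by
  refine ext_of_mulVec_one_eq_zero (kuraJac_mulVec_one _ _)
    (kronSum_mulVec_one_s13 (kuraJac_mulVec_one _ _) (kuraJac_mulVec_one _ _)) ?_
  rintro ⟨l, i⟩ ⟨k, j⟩ hne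
  rw [kuraJac_apply_of_ne _ _ hne]
  simp only [kronSum, hθ]
  by_cases hij : i = j <;> by_cases hlk : l = k
  · simp_all
  · subst hij
    simp [hlk, kuraJac_apply_of_ne _ _ hlk]
  · subst hlk
    simp [hij, kuraJac_apply_of_ne _ _ hij]
  · simp [hij, hlk]

theorem composed_equilibrium_linStable_iff_general
    (M N : ℕ) (hM : 0 < M) (hN : 0 < N)
    (A : Matrix (Fin M) (Fin M) ℝ) (B : Matrix (Fin N) (Fin N) ℝ)
    (hAsymm : A.IsSymm) (hBsymm : B.IsSymm)
    (φ : Fin M → ℝ) (ψ : Fin N → ℝ)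
    (θ : Fin M × Fin N → ℝ) (hθ : ∀ (l : Fin M) (i : Fin N), θ (l, i) = φ l + ψ i) :
    LinStable (kronSum A B) θ ↔ (LinStable A φ ∧ LinStable B ψ) := by
  have : Nonempty (Fin M) := ⟨⟨0, hM⟩⟩
  have : Nonempty (Fin N) := ⟨⟨0, hN⟩⟩
  rw [linStable_iff, linStable_iff, linStable_iff, kuraJac_kronSum A B hθ, neg_kronSum]
  exact posSemidef_and_hasConstantKernel_kronSum_iff (kuraJac_isSymm φ hAsymm).neg
    (kuraJac_isSymm ψ hBsymm).neg (neg_kuraJac_mulVec_one A φ) (neg_kuraJac_mulVec_one B ψ)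

theorem composed_equilibrium_linStable_iff
    (M N : ℕ) (hM : 0 < M) (hN : 0 < N)
    (A : Matrix (Fin M) (Fin M) ℝ) (B : Matrix (Fin N) (Fin N) ℝ)
    (hAsymm : A.IsSymm) (hBsymm : B.IsSymm)
    (φ : Fin M → ℝ) (ψ : Fin N → ℝ)
    (hφ : kuraField A φ = 0) (hψ : kuraField B ψ = 0)
    (θ : Fin M × Fin N → ℝ) (hθ : ∀ (l : Fin M) (i : Fin N), θ (l, i) = φ l + ψ i) :
    LinStable (kronSum A B) θ ↔ (LinStable A φ ∧ LinStable B ψ) :=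
  composed_equilibrium_linStable_iff_general M N hM hN A B hAsymm hBsymm φ ψ θ hθ
end

section
/- Let N : ℕ be positive and let c : ZMod N → ℝ be an even function, i.e. c d = c (-d) for all d : ZMod N. Define the circulant coupling matrix A : Matrix (Fin N) (Fin N) ℝ by A i j = c ((j : ZMod N) - (i : ZMod N)), and for an integer p define the twisted state ψ : Fin N → ℝ by ψ i = -(2 * Real.pi * p * i) / N. Then ψ is an equilibrium of the Kuramoto system on A: for every i : Fin N, ∑ j, A i j * Real.sin (ψ j - ψ i) = 0. -/
/-!
Reindexed by `d = j - i ∈ ZMod N`, the Kuramoto sum at `i` becomes `-∑ d, c d * χ d` with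
`χ d = Im e^{2πi p d / N}`, the imaginary part of an additive character. The product of the
even coupling `c` with the odd function `χ` is odd, so pairing `d` with `-d` kills the sum.
-/

open Real

namespace ZMod

variable {N : ℕ} [NeZero N]

theorem odd_im_toCircle : Function.Odd fun d : ZMod N => (toCircle d : ℂ).im := fun d => by
  dsimp only
  rw [AddChar.map_neg_eq_inv, Circle.coe_inv_eq_conj, Complex.conj_im]

theorem im_toCircle_intCast (k : ℤ) :
    (toCircle (k : ZMod N) : ℂ).im = Real.sin (2 * π * k / N) := by
  rw [toCircle_intCast, ← Complex.exp_ofReal_mul_I_im]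
  push_cast
  ring_nf

theorem bijective_natCast_fin_val : Function.Bijective fun j : Fin N => ((j : ℕ) : ZMod N) :=
  Function.bijective_iff_has_inverse.mpr
    ⟨fun d => ⟨d.val, d.val_lt⟩, fun j => Fin.ext (val_natCast_of_lt j.isLt), natCast_zmod_val⟩

theorem sum_fin_natCast_sub {M : Type*} [AddCommMonoid M] (F : ZMod N → M) (a : ZMod N) :
    ∑ j : Fin N, F ((j : ℕ) - a) = ∑ d, F d :=
  (bijective_natCast_fin_val.sum_comp fun d => F (d - a)).trans ((Equiv.subRight a).sum_comp F)

end ZMod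

theorem sin_sub_twisted_phases (N : ℕ) [NeZero N] (p : ℤ) (i j : ℕ) :
    Real.sin (-(2 * π * p * j) / N - -(2 * π * p * i) / N)
      = -(ZMod.toCircle ((p : ZMod N) * ((j : ZMod N) - (i : ZMod N))) : ℂ).im := by
  have hcast : (p : ZMod N) * ((j : ZMod N) - (i : ZMod N)) = ((p * (j - i) : ℤ) : ZMod N) := by
    push_cast
    ring
  rw [hcast, ZMod.im_toCircle_intCast, ← Real.sin_neg]
  push_cast
  ring_nf

theorem twisted_state_is_equilibrium_of_circulant
    (N : ℕ) (hN : 0 < N)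
    (c : ZMod N → ℝ) (hc : ∀ d : ZMod N, c d = c (-d))
    (A : Matrix (Fin N) (Fin N) ℝ)
    (hA : ∀ i j : Fin N, A i j = c ((j : ZMod N) - (i : ZMod N)))
    (p : ℤ) (ψ : Fin N → ℝ)
    (hψ : ∀ i : Fin N, ψ i = -(2 * Real.pi * (p : ℝ) * (i : ℝ)) / N) :
    ∀ i : Fin N, ∑ j, A i j * Real.sin (ψ j - ψ i) = 0 := by
  have : NeZero N := ⟨hN.ne'⟩
  intro i
  let χ : ZMod N → ℝ := fun d => (ZMod.toCircle ((p : ZMod N) * d) : ℂ).im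
  have hχ : χ.Odd := ZMod.odd_im_toCircle.comp_odd fun d => mul_neg _ _
  have hc_even : c.Even := fun d => (hc d).symm
  have hterm : ∀ j : Fin N, A i j * Real.sin (ψ j - ψ i) = -(c * χ) ((j : ℕ) - (i : ℕ)) := by
    intro j
    rw [hA, hψ, hψ, sin_sub_twisted_phases, Pi.mul_apply, mul_neg]
  rw [Finset.sum_congr rfl fun j _ => hterm j, Finset.sum_neg_distrib,
    ZMod.sum_fin_natCast_sub (c * χ), (hc_even.mul_odd hχ).sum_eq_zero, neg_zero]
end
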